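/- Let p: V → U and q: V → W be linear maps between finite-dimensional K-vector spaces with p surjective and q(ker p) = 0, and let g = q∘p^{-1} be the induced map. Consider the A_3(bf) representation U ← V → W and any indecomposable decomposition h of it into intervals I[b,d]. Then the map h_W^{-1} ∘ ι_W ∘ π_U ∘ h_U (projecting to the coordinates of the summand I[1,3]^{m_{1,3}} in U and including into W) equals g. In particular, the representation-theoretic induced map coincides with q∘p^{-1}. -/

import Mathlib

/- The `A₃(bf)` quiver: vertices `1,2,3`, arrows `2 → 1` and `2 → 3`.  Interval
representations `I[b,d]` for `1 ≤ b ≤ d ≤ 3`.  The direct sum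
`⊕_{1 ≤ b ≤ d ≤ 3} I[b,d]^{m (b,d)}` has the following explicit model. -/
section Model

variable (K : Type) [Field K] (m11 m12 m13 m22 m23 m33 : ℕ)

/-- Vertex-1 space of `⊕ I[b,d]^{m_{b,d}}`: the intervals containing vertex 1 are
`[1,1], [1,2], [1,3]`. -/
abbrev DS1 := ((Fin m11 → K) × (Fin m12 → K) × (Fin m13 → K))

/-- Vertex-2 space: intervals `[1,2], [1,3], [2,2], [2,3]`. -/
abbrev DS2 := ((Fin m12 → K) × (Fin m13 → K) × (Fin m22 → K) × (Fin m23 → K))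

/-- Vertex-3 space: intervals `[1,3], [2,3], [3,3]`. -/
abbrev DS3 := ((Fin m13 → K) × (Fin m23 → K) × (Fin m33 → K))

/-- The structure map of `⊕ I[b,d]^{m_{b,d}}` along the arrow `2 → 1`:
`(x12, x13, x22, x23) ↦ (0, x12, x13)`. -/
noncomputable def pD : DS2 K m12 m13 m22 m23 →ₗ[K] DS1 K m11 m12 m13 :=
  LinearMap.prod 0 (LinearMap.prod (LinearMap.fst K _ _)
    ((LinearMap.fst K _ _).comp (LinearMap.snd K _ _)))

/-- The structure map along the arrow `2 → 3`: `(x12, x13, x22, x23) ↦ (x13, x23, 0)`. -/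
noncomputable def qD : DS2 K m12 m13 m22 m23 →ₗ[K] DS3 K m13 m23 m33 :=
  LinearMap.prod ((LinearMap.fst K _ _).comp (LinearMap.snd K _ _))
    (LinearMap.prod
      ((LinearMap.snd K _ _).comp ((LinearMap.snd K _ _).comp (LinearMap.snd K _ _)))
      0)

end Model

/-- Projection of the vertex-1 space onto the coordinates of the summand `I[1,3]^{m13}`. -/
noncomputable def pi13U (K : Type) [Field K] (m11 m12 m13 : ℕ) :
    DS1 K m11 m12 m13 →ₗ[K] (Fin m13 → K) :=
  (LinearMap.snd K _ _).comp (LinearMap.snd K _ _)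

/-- Inclusion of the `I[1,3]`-coordinates into the vertex-3 space. -/
noncomputable def iota13W (K : Type) [Field K] (m13 m23 m33 : ℕ) :
    (Fin m13 → K) →ₗ[K] DS3 K m13 m23 m33 :=
  LinearMap.prod LinearMap.id 0

/-! On the interval model, `ι_W ∘ π_U ∘ p_D` and `q_D` differ only on the `I[2,3]`-summands,
which `q` sees but `p` kills. Since `g ∘ p = q` gives `ker p ≤ ker q`, there are no such summands,
so `h_W⁻¹ ∘ ι_W ∘ π_U ∘ h_U` and `g` agree after composition with `p`, which is surjective. -/

section IntervalModel

variable (K : Type) [Field K] {m11 m12 m13 m22 m23 m33 : ℕ}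

theorem subsingleton_of_ker_pD_le_ker_qD
    (h : LinearMap.ker (pD K m11 m12 m13 m22 m23) ≤ LinearMap.ker (qD K m12 m13 m22 m23 m33)) :
    Subsingleton (Fin m23 → K) := by
  refine subsingleton_of_forall_eq 0 fun t => ?_
  have hker : ((0, 0, 0, t) : DS2 K m12 m13 m22 m23) ∈ LinearMap.ker (pD K m11 m12 m13 m22 m23) :=
    by simp [pD]
  simpa [qD] using congrArg (fun z : DS3 K m13 m23 m33 => z.2.1) (LinearMap.mem_ker.1 (h hker))

theorem iota13W_comp_pi13U_comp_pD [Subsingleton (Fin m23 → K)] :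
    iota13W K m13 m23 m33 ∘ₗ pi13U K m11 m12 m13 ∘ₗ pD K m11 m12 m13 m22 m23 =
      qD K m12 m13 m22 m23 m33 := by
  refine LinearMap.ext fun x => ?_
  simp [iota13W, pi13U, pD, qD, Prod.ext_iff, Subsingleton.elim x.2.2.2 0]

end IntervalModel

theorem LinearMap.ker_le_ker_of_conj {R U V W U' V' W' : Type*} [Semiring R]
    [AddCommMonoid U] [Module R U] [AddCommMonoid V] [Module R V] [AddCommMonoid W] [Module R W]
    [AddCommMonoid U'] [Module R U'] [AddCommMonoid V'] [Module R V'] [AddCommMonoid W']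
    [Module R W'] {p : V →ₗ[R] U} {q : V →ₗ[R] W} {p' : V' →ₗ[R] U'} {q' : V' →ₗ[R] W'}
    (eU : U ≃ₗ[R] U') (eV : V ≃ₗ[R] V') (eW : W ≃ₗ[R] W')
    (hp : p' ∘ₗ (eV : V →ₗ[R] V') = (eU : U →ₗ[R] U') ∘ₗ p)
    (hq : q' ∘ₗ (eV : V →ₗ[R] V') = (eW : W →ₗ[R] W') ∘ₗ q)
    (h : LinearMap.ker p ≤ LinearMap.ker q) : LinearMap.ker p' ≤ LinearMap.ker q' := by
  intro x hx
  obtain ⟨v, rfl⟩ := eV.surjective x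
  have hpv : p v = 0 := eU.map_eq_zero_iff.1 <| (LinearMap.congr_fun hp v).symm.trans hx
  exact (LinearMap.congr_fun hq v).trans <| by simp [LinearMap.mem_ker.1 (h hpv)]

theorem induced_map_via_decomposition_general
    (K : Type) [Field K] (m11 m12 m13 m22 m23 m33 : ℕ)
    (U V W : Type) [AddCommGroup U] [Module K U] [AddCommGroup V] [Module K V]
    [AddCommGroup W] [Module K W]
    (p : V →ₗ[K] U) (q : V →ₗ[K] W)
    (hsurj : Function.Surjective p)
    (g : U →ₗ[K] W) (hg : g ∘ₗ p = q)
    (hU : U ≃ₗ[K] DS1 K m11 m12 m13) (hV : V ≃ₗ[K] DS2 K m12 m13 m22 m23)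
    (hW : W ≃ₗ[K] DS3 K m13 m23 m33)
    (hp : (pD K m11 m12 m13 m22 m23) ∘ₗ (hV : V →ₗ[K] _) = (hU : U →ₗ[K] _) ∘ₗ p)
    (hq : (qD K m12 m13 m22 m23 m33) ∘ₗ (hV : V →ₗ[K] _) = (hW : W →ₗ[K] _) ∘ₗ q) :
    (hW.symm : DS3 K m13 m23 m33 →ₗ[K] W) ∘ₗ iota13W K m13 m23 m33 ∘ₗ
      pi13U K m11 m12 m13 ∘ₗ (hU : U →ₗ[K] _) = g := by
  have hker : LinearMap.ker p ≤ LinearMap.ker q := hg ▸ LinearMap.ker_le_ker_comp p g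
  have := subsingleton_of_ker_pD_le_ker_qD K (LinearMap.ker_le_ker_of_conj hU hV hW hp hq hker)
  refine (LinearMap.cancel_right hsurj).1 ?_
  calc (hW.symm : DS3 K m13 m23 m33 →ₗ[K] W) ∘ₗ iota13W K m13 m23 m33 ∘ₗ
          pi13U K m11 m12 m13 ∘ₗ (hU : U →ₗ[K] _) ∘ₗ p
      = (hW.symm : DS3 K m13 m23 m33 →ₗ[K] W) ∘ₗ (iota13W K m13 m23 m33 ∘ₗ
          pi13U K m11 m12 m13 ∘ₗ pD K m11 m12 m13 m22 m23) ∘ₗ (hV : V →ₗ[K] _) := by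
        rw [← hp]; rfl
    _ = (hW.symm : DS3 K m13 m23 m33 →ₗ[K] W) ∘ₗ (hW : W →ₗ[K] _) ∘ₗ q := by
        rw [iota13W_comp_pi13U_comp_pD, hq]
    _ = g ∘ₗ p := by ext; simp [hg]

/-- Let `p : V → U`, `q : V → W` with `p` surjective and `q (ker p) = 0`,
and let `g` be the induced map (`g ∘ p = q`).  For any indecomposable decomposition
`h = (hU, hV, hW)` of the `A₃(bf)` representation `U ← V → W` into intervals, the map
`hW⁻¹ ∘ ι_W ∘ π_U ∘ hU` (projecting onto the `I[1,3]`-coordinates in `U` and including them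
into `W`) equals `g`; i.e. the representation-theoretic induced map coincides with
`q ∘ p⁻¹`. -/
theorem induced_map_via_decomposition
    (K : Type) [Field K] (m11 m12 m13 m22 m23 m33 : ℕ)
    (U V W : Type) [AddCommGroup U] [Module K U] [AddCommGroup V] [Module K V]
    [AddCommGroup W] [Module K W]
    (p : V →ₗ[K] U) (q : V →ₗ[K] W)
    (hsurj : Function.Surjective p) (hcons : ∀ v, p v = 0 → q v = 0)
    (g : U →ₗ[K] W) (hg : g ∘ₗ p = q)
    (hU : U ≃ₗ[K] DS1 K m11 m12 m13) (hV : V ≃ₗ[K] DS2 K m12 m13 m22 m23)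
    (hW : W ≃ₗ[K] DS3 K m13 m23 m33)
    (hp : (pD K m11 m12 m13 m22 m23) ∘ₗ (hV : V →ₗ[K] _) = (hU : U →ₗ[K] _) ∘ₗ p)
    (hq : (qD K m12 m13 m22 m23 m33) ∘ₗ (hV : V →ₗ[K] _) = (hW : W →ₗ[K] _) ∘ₗ q) :
    (hW.symm : DS3 K m13 m23 m33 →ₗ[K] W) ∘ₗ iota13W K m13 m23 m33 ∘ₗ
      pi13U K m11 m12 m13 ∘ₗ (hU : U →ₗ[K] _) = g :=
  induced_map_via_decomposition_general K m11 m12 m13 m22 m23 m33 U V W p q hsurj g hg hU hV hW hp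
    hq
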